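/- Conditional unbiasedness of the chain-ladder predictor: under Mack's model, the chain-ladder predictor $\widehat{C}_{i,J} = C_{i,I-i}\prod_{l=I-i}^{J-1}\widehat{f}_l$ for accident period $i > I-J$ satisfies $\mathbb{E}[\widehat{C}_{i,J} \mid \mathcal{B}_{I-i}] = \mathbb{E}[C_{i,J} \mid \mathcal{B}_{I-i}]$ almost surely, where $\mathcal{B}_{j}$ is the sigma-algebra generated by all observations $C_{k,l}$ with $l \le j$. -/

import Mathlib

/-!
Both sides are computed by backward induction along the filtration `histAll I C`. The rows are
independent, so conditioning `C k (j + 1)` on the whole history `histAll I C j` is the same as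
conditioning on its own row's history, and Mack's assumption gives `f j * C k j`. The chain-ladder
factor `f̂ j` is a ratio of column sums whose denominator is known at time `j`, so the partial
predictors `Ĉ_{i,j} = C i (I - i) * ∏_{I - i ≤ l < j} f̂ l` satisfy the same one-step relation
`E[Ĉ_{i,j+1} | histAll I C j] = f j * Ĉ_{i,j}` as the claims `C i j`. Both conditional
expectations therefore equal `(∏_{I - i ≤ l < J} f l) * C i (I - i)`.
-/

open MeasureTheory Finset

/-- The sigma-algebra generated by the observations of accident period `i` up to
development period `j`. -/
def hist {Ω : Type*} (C : ℕ → Ω → ℝ) (j : ℕ) : MeasurableSpace Ω :=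
  ⨆ k ∈ Set.Iic j, MeasurableSpace.comap (C k) inferInstance

/-- The sigma-algebra generated by all observations `C k l`, `l ≤ j`, `1 ≤ k ≤ I`. -/
def histAll {Ω : Type*} (I : ℕ) (C : ℕ → ℕ → Ω → ℝ) (j : ℕ) : MeasurableSpace Ω :=
  ⨆ k ∈ Set.Icc 1 I, ⨆ l ∈ Set.Iic j, MeasurableSpace.comap (C k l) inferInstance

open ProbabilityTheory

section CondExpSup

variable {Ω : Type*} {m m₁ m₂ m0 : MeasurableSpace Ω} {μ : Measure Ω}

theorem setIntegral_eq_of_isPiSystem (hm : m ≤ m0) {s : Set (Set Ω)}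
    (h_gen : m = MeasurableSpace.generateFrom s) (h_pi : IsPiSystem s) {F G : Ω → ℝ}
    (hF : Integrable F μ) (hG : Integrable G μ) (h_univ : ∫ x, F x ∂μ = ∫ x, G x ∂μ)
    (h_basic : ∀ t ∈ s, ∫ x in t, F x ∂μ = ∫ x in t, G x ∂μ) {t : Set Ω}
    (ht : MeasurableSet[m] t) : ∫ x in t, F x ∂μ = ∫ x in t, G x ∂μ := by
  induction t, ht using MeasurableSpace.induction_on_inter h_gen h_pi with
  | empty => simp
  | basic t ht => exact h_basic t ht
  | compl t ht ih =>
    have hF_add := integral_add_compl (hm t ht) hF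
    have hG_add := integral_add_compl (hm t ht) hG
    linarith
  | iUnion u hdisj hu ih =>
    rw [integral_iUnion (fun n => hm _ (hu n)) hdisj hF.integrableOn,
      integral_iUnion (fun n => hm _ (hu n)) hdisj hG.integrableOn]
    exact tsum_congr ih

theorem isPiSystem_image2_inter (m₁ m₂ : MeasurableSpace Ω) :
    IsPiSystem (Set.image2 (· ∩ ·) {A | MeasurableSet[m₁] A} {B | MeasurableSet[m₂] B}) := by
  rintro _ ⟨A, hA, B, hB, rfl⟩ _ ⟨A', hA', B', hB', rfl⟩ -
  exact ⟨A ∩ A', hA.inter hA', B ∩ B', hB.inter hB', Set.inter_inter_inter_comm A A' B B'⟩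

theorem sup_eq_generateFrom_image2_inter (m₁ m₂ : MeasurableSpace Ω) :
    m₁ ⊔ m₂ = MeasurableSpace.generateFrom
      (Set.image2 (· ∩ ·) {A | MeasurableSet[m₁] A} {B | MeasurableSet[m₂] B}) := by
  refine le_antisymm (sup_le (fun A hA => ?_) (fun B hB => ?_)) ?_
  · exact .basic _ ⟨A, hA, .univ, .univ, Set.inter_univ A⟩
  · exact .basic _ ⟨.univ, .univ, B, hB, Set.univ_inter B⟩
  · refine MeasurableSpace.generateFrom_le ?_
    rintro _ ⟨A, hA, B, hB, rfl⟩
    exact (le_sup_left (b := m₂) A hA).inter (le_sup_right (a := m₁) B hB)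

theorem setIntegral_inter_of_indep [IsProbabilityMeasure μ]
    (hle₁ : m₁ ≤ m0) (hle₂ : m₂ ≤ m0) (hind : Indep m₁ m₂ μ) {h : Ω → ℝ}
    (hh : Measurable[m₁] h) (hint : Integrable h μ) {A B : Set Ω} (hA : MeasurableSet[m₁] A)
    (hB : MeasurableSet[m₂] B) :
    ∫ x in A ∩ B, h x ∂μ = (∫ x in A, h x ∂μ) * μ.real B := by
  have h1B : Measurable[m₂] (B.indicator (1 : Ω → ℝ)) := measurable_const.indicator hB
  have hind_fun : IndepFun (A.indicator h) (B.indicator (1 : Ω → ℝ)) μ :=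
    (IndepFun_iff_Indep _ _ μ).2 (indep_of_indep_of_le_right
      (indep_of_indep_of_le_left hind (hh.indicator hA).comap_le) h1B.comap_le)
  have h_prod : (A ∩ B).indicator h = A.indicator h * B.indicator 1 := by
    ext x
    by_cases hxA : x ∈ A <;> by_cases hxB : x ∈ B <;> simp [hxA, hxB]
  rw [← integral_indicator ((hle₁ A hA).inter (hle₂ B hB)), h_prod,
    hind_fun.integral_mul_eq_mul_integral (hint.indicator (hle₁ A hA)).aestronglyMeasurable
      ((integrable_const 1).indicator (hle₂ B hB)).aestronglyMeasurable,
    integral_indicator (hle₁ A hA), integral_indicator_one (hle₂ B hB)]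

theorem condExp_sup_eq_of_indep [IsProbabilityMeasure μ]
    (hle₁ : m₁ ≤ m0) (hle₂ : m₂ ≤ m0) {X : Ω → ℝ} (hX : Measurable X) (hint : Integrable X μ)
    (hind : Indep (m₁ ⊔ MeasurableSpace.comap X inferInstance) m₂ μ) :
    μ[X | m₁ ⊔ m₂] =ᵐ[μ] μ[X | m₁] := by
  have hle : m₁ ⊔ MeasurableSpace.comap X inferInstance ≤ m0 := sup_le hle₁ hX.comap_le
  have hXm : Measurable[m₁ ⊔ MeasurableSpace.comap X inferInstance] X :=
    Measurable.of_comap_le le_sup_right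
  have hgm : Measurable[m₁ ⊔ MeasurableSpace.comap X inferInstance] μ[X | m₁] :=
    stronglyMeasurable_condExp.measurable.mono le_sup_left le_rfl
  have hA_sup : ∀ A, MeasurableSet[m₁] A →
      MeasurableSet[m₁ ⊔ MeasurableSpace.comap X inferInstance] A :=
    fun A hA => le_sup_left (b := MeasurableSpace.comap X inferInstance) A hA
  refine (ae_eq_condExp_of_forall_setIntegral_eq (sup_le hle₁ hle₂) hint
    (fun _ _ _ => integrable_condExp.integrableOn) (fun s hs _ => ?_)
    (stronglyMeasurable_condExp.mono (le_sup_left (b := m₂))).aestronglyMeasurable).symm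
  refine setIntegral_eq_of_isPiSystem (sup_le hle₁ hle₂) (sup_eq_generateFrom_image2_inter m₁ m₂)
    (isPiSystem_image2_inter m₁ m₂) integrable_condExp hint (integral_condExp hle₁) ?_ hs
  rintro _ ⟨A, hA, B, hB, rfl⟩
  rw [setIntegral_inter_of_indep hle hle₂ hind hgm integrable_condExp (hA_sup A hA) hB,
    setIntegral_inter_of_indep hle hle₂ hind hXm hint (hA_sup A hA) hB,
    setIntegral_condExp hle₁ hint hA]

end CondExpSup

theorem condExp_eq_prod_smul_of_condExp_succ {Ω : Type*} {m0 : MeasurableSpace Ω}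
    {μ : Measure Ω} [IsFiniteMeasure μ] (ℱ : Filtration ℕ m0) {X : ℕ → Ω → ℝ} {f : ℕ → ℝ}
    {j J : ℕ} (hjJ : j ≤ J) (hXJ : StronglyMeasurable[ℱ J] (X J)) (hint : Integrable (X J) μ)
    (hf : ∀ l ∈ Ico j J, f l ≠ 0)
    (hstep : ∀ l ∈ Ico j J, Integrable (X (l + 1)) μ → μ[X (l + 1) | ℱ l] =ᵐ[μ] f l • X l) :
    μ[X J | ℱ j] =ᵐ[μ] (∏ l ∈ Ico j J, f l) • X j := by
  induction hjJ using Nat.decreasingInduction with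
  | self => simpa using (condExp_of_stronglyMeasurable (ℱ.le J) hXJ hint).eventuallyEq
  | of_succ k hkJ ih =>
    have hsub : Ico (k + 1) J ⊆ Ico k J := Ico_subset_Ico_left k.le_succ
    have ih := ih (fun l hl => hf l (hsub hl)) (fun l hl => hstep l (hsub hl))
    -- `X (k + 1)` is integrable because `ih` makes a nonzero multiple of it a conditional expectation
    have hint_succ : Integrable (X (k + 1)) μ :=
      (integrable_const_mul_iff (prod_ne_zero_iff.2 fun l hl => hf l (hsub hl)).isUnit _).1
        (integrable_condExp.congr ih)
    calc μ[X J | ℱ k] =ᵐ[μ] μ[μ[X J | ℱ (k + 1)] | ℱ k] :=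
          (condExp_condExp_of_le (ℱ.mono k.le_succ) (ℱ.le (k + 1))).symm
      _ =ᵐ[μ] μ[(∏ l ∈ Ico (k + 1) J, f l) • X (k + 1) | ℱ k] := condExp_congr_ae ih
      _ =ᵐ[μ] (∏ l ∈ Ico (k + 1) J, f l) • μ[X (k + 1) | ℱ k] := condExp_smul _ _ _
      _ =ᵐ[μ] (∏ l ∈ Ico (k + 1) J, f l) • f k • X k :=
          (hstep k (mem_Ico.2 ⟨le_rfl, hkJ⟩) hint_succ).const_smul _
      _ = (∏ l ∈ Ico k J, f l) • X k := by
          rw [smul_smul, prod_eq_prod_Ico_succ_bot hkJ, mul_comm]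

section ChainLadder

variable {Ω : Type*} {m0 : MeasurableSpace Ω} {μ : Measure Ω} {I : ℕ} {C : ℕ → ℕ → Ω → ℝ}

theorem measurable_histAll {j k l : ℕ} (hk : k ∈ Set.Icc 1 I) (hl : l ≤ j) :
    Measurable[histAll I C j] (C k l) :=
  Measurable.of_comap_le (le_iSup₂_of_le k hk (le_iSup₂_of_le l (Set.mem_Iic.2 hl) le_rfl))

theorem histAll_mono : Monotone (histAll I C) := fun _ _ hjj' =>
  iSup₂_mono fun _ _ => biSup_mono fun _ hl => le_trans hl hjj'

theorem histAll_le (hmeas : ∀ k l, Measurable (C k l)) (j : ℕ) : histAll I C j ≤ m0 :=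
  iSup₂_le fun k _ => iSup₂_le fun l _ => (hmeas k l).comap_le

def histAllFiltration (hmeas : ∀ k l, Measurable (C k l)) : Filtration ℕ m0 :=
  ⟨histAll I C, histAll_mono, histAll_le hmeas⟩

theorem comap_le_comap_pi (Y : ℕ → Ω → ℝ) (l : ℕ) :
    MeasurableSpace.comap (Y l) inferInstance ≤
      MeasurableSpace.comap (fun ω j => Y j ω) MeasurableSpace.pi :=
  Measurable.comap_le <| (measurable_pi_apply l).comp (f := fun ω j => Y j ω)
    (Measurable.of_comap_le le_rfl)

theorem hist_le_comap_pi (Y : ℕ → Ω → ℝ) (j : ℕ) :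
    hist Y j ≤ MeasurableSpace.comap (fun ω l => Y l ω) MeasurableSpace.pi :=
  iSup₂_le fun l _ => comap_le_comap_pi Y l

theorem condExp_histAll_eq_condExp_hist [IsProbabilityMeasure μ]
    (hmeas : ∀ k l, Measurable (C k l))
    (hindep : iIndepFun (m := fun _ => MeasurableSpace.pi) (fun k ω l => C k l ω) μ)
    {k j l : ℕ} (hk : k ∈ Set.Icc 1 I) (hint : Integrable (C k l) μ) :
    μ[C k l | histAll I C j] =ᵐ[μ] μ[C k l | hist (C k) j] := by
  set row : ℕ → MeasurableSpace Ω :=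
    fun k => MeasurableSpace.comap (fun ω l => C k l ω) MeasurableSpace.pi
  have hrow_le : ∀ k, row k ≤ m0 := fun k => (measurable_pi_lambda _ (hmeas k)).comap_le
  have hsplit : histAll I C j = hist (C k) j ⊔ ⨆ k' ∈ Set.Icc 1 I \ {k}, hist (C k') j := by
    change ⨆ k' ∈ Set.Icc 1 I, hist (C k') j = _
    rw [← Set.insert_sdiff_self_of_mem hk, _root_.iSup_insert, Set.insert_sdiff_self_of_mem hk]
  have hind : Indep (hist (C k) j ⊔ MeasurableSpace.comap (C k l) inferInstance)
      (⨆ k' ∈ Set.Icc 1 I \ {k}, hist (C k') j) μ := by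
    refine indep_of_indep_of_le_right (indep_of_indep_of_le_left
      (indep_iSup_of_disjoint hrow_le ((iIndepFun_iff_iIndep _ _ _).1 hindep)
        (disjoint_compl_right (a := ({k} : Set ℕ)))) ?_) ?_
    · exact (sup_le (hist_le_comap_pi (C k) j) (comap_le_comap_pi (C k) l)).trans
        (le_biSup row rfl)
    · exact iSup₂_le fun k' hk' => (hist_le_comap_pi (C k') j).trans (le_biSup row hk'.2)
  rw [hsplit]
  exact condExp_sup_eq_of_indep ((hist_le_comap_pi (C k) j).trans (hrow_le k))
    (iSup₂_le fun k' _ => (hist_le_comap_pi (C k') j).trans (hrow_le k')) (hmeas k l) hint hind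

theorem condExp_sum_histAll [IsProbabilityMeasure μ] (hmeas : ∀ k l, Measurable (C k l))
    (hint : ∀ k l, Integrable (C k l) μ)
    (hindep : iIndepFun (m := fun _ => MeasurableSpace.pi) (fun k ω l => C k l ω) μ)
    {f : ℝ} {j : ℕ} {s : Finset ℕ} (hs : ∀ k ∈ s, k ∈ Set.Icc 1 I)
    (hCL : ∀ k, μ[C k (j + 1) | hist (C k) j] =ᵐ[μ] f • C k j) :
    μ[∑ k ∈ s, C k (j + 1) | histAll I C j] =ᵐ[μ] f • ∑ k ∈ s, C k j := by
  rw [smul_sum]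
  exact (condExp_finsetSum (fun k _ => hint k (j + 1)) _).trans <| eventuallyEq_sum fun k hk =>
    (condExp_histAll_eq_condExp_hist hmeas hindep (hs k hk) (hint k (j + 1))).trans (hCL k)

/-- The chain-ladder estimator `f̂_j`. -/
noncomputable def chainLadderFactor (I : ℕ) (C : ℕ → ℕ → Ω → ℝ) (j : ℕ) : Ω → ℝ := fun ω =>
  (∑ k ∈ Icc 1 (I - j - 1), C k (j + 1) ω) / (∑ k ∈ Icc 1 (I - j - 1), C k j ω)

/-- The partial chain-ladder predictor `Ĉ_{i,j}`; the theorem is about `Ĉ_{i,J}`. -/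
noncomputable def chainLadderPredictor (I : ℕ) (C : ℕ → ℕ → Ω → ℝ) (i j : ℕ) : Ω → ℝ := fun ω =>
  C i (I - i) ω * ∏ l ∈ Ico (I - i) j, chainLadderFactor I C l ω

theorem chainLadderPredictor_self (I : ℕ) (C : ℕ → ℕ → Ω → ℝ) (i : ℕ) :
    chainLadderPredictor I C i (I - i) = C i (I - i) := by
  ext ω
  simp [chainLadderPredictor]

theorem measurable_chainLadderFactor {j l : ℕ} (hl : l < j) :
    Measurable[histAll I C j] (chainLadderFactor I C l) := by
  have hk : ∀ k ∈ Icc 1 (I - l - 1), k ∈ Set.Icc 1 I := fun k hk => by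
    simp only [mem_Icc, Set.mem_Icc] at hk ⊢
    omega
  exact (Finset.measurable_sum _ fun k h => measurable_histAll (hk k h) hl).div
    (Finset.measurable_sum _ fun k h => measurable_histAll (hk k h) hl.le)

theorem measurable_chainLadderPredictor {i j : ℕ} (hi : i ∈ Set.Icc 1 I) (hij : I - i ≤ j) :
    Measurable[histAll I C j] (chainLadderPredictor I C i j) :=
  (measurable_histAll hi hij).mul
    (Finset.measurable_prod _ fun _ hl => measurable_chainLadderFactor (mem_Ico.1 hl).2)

theorem condExp_chainLadderPredictor_succ [IsProbabilityMeasure μ]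
    (hmeas : ∀ k l, Measurable (C k l)) (hint : ∀ k l, Integrable (C k l) μ)
    (hindep : iIndepFun (m := fun _ => MeasurableSpace.pi) (fun k ω l => C k l ω) μ)
    {f : ℝ} {i j : ℕ} (hi : i ∈ Set.Icc 1 I) (hij : I - i ≤ j) (hjI : j + 2 ≤ I)
    (hpos : ∀ k, ∀ᵐ ω ∂μ, 0 < C k j ω)
    (hCL : ∀ k, μ[C k (j + 1) | hist (C k) j] =ᵐ[μ] f • C k j)
    (hint_succ : Integrable (chainLadderPredictor I C i (j + 1)) μ) :
    μ[chainLadderPredictor I C i (j + 1) | histAll I C j] =ᵐ[μ]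
      f • chainLadderPredictor I C i j := by
  have hs : ∀ k ∈ Icc 1 (I - j - 1), k ∈ Set.Icc 1 I := fun k hk => by
    simp only [mem_Icc, Set.mem_Icc] at hk ⊢
    omega
  have hsplit : chainLadderPredictor I C i (j + 1) =
      (chainLadderPredictor I C i j / ∑ k ∈ Icc 1 (I - j - 1), C k j) *
        ∑ k ∈ Icc 1 (I - j - 1), C k (j + 1) := by
    ext ω
    simp only [chainLadderPredictor, chainLadderFactor, prod_Ico_succ_top hij, Pi.mul_apply,
      Pi.div_apply, Finset.sum_apply]
    ring
  have hsum_pos : ∀ᵐ ω ∂μ, 0 < ∑ k ∈ Icc 1 (I - j - 1), C k j ω := by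
    filter_upwards [ae_all_iff.2 hpos] with ω hω
    exact sum_pos (fun k _ => hω k) (nonempty_Icc.2 (by omega))
  have hfactor_meas : StronglyMeasurable[histAll I C j]
      (chainLadderPredictor I C i j / ∑ k ∈ Icc 1 (I - j - 1), C k j) :=
    ((measurable_chainLadderPredictor hi hij).div <| by
      rw [Finset.sum_fn]
      exact Finset.measurable_sum _ fun k h => measurable_histAll (hs k h) le_rfl).stronglyMeasurable
  rw [hsplit] at hint_succ ⊢
  refine (condExp_mul_of_stronglyMeasurable_left hfactor_meas hint_succ
    (integrable_finsetSum' _ fun k _ => hint k (j + 1))).trans ?_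
  filter_upwards [condExp_sum_histAll hmeas hint hindep hs hCL, hsum_pos] with ω h_sum h_pos
  simp only [Pi.mul_apply, Pi.div_apply, Pi.smul_apply, smul_eq_mul, h_sum, Finset.sum_apply]
  field_simp

end ChainLadder
theorem stmt_8_general {Ω : Type*} {m0 : MeasurableSpace Ω} (μ : Measure Ω) [IsProbabilityMeasure μ]
    (I J i : ℕ) (hIJ : J < I) (hi1 : I - J < i) (hi2 : i ≤ I)
    (C : ℕ → ℕ → Ω → ℝ) (f : ℕ → ℝ)
    (hmeas : ∀ k j, Measurable (C k j))
    (hint : ∀ k j, Integrable (C k j) μ)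
    (hpos : ∀ k j, ∀ᵐ ω ∂μ, 0 < C k j ω)
    (hf : ∀ j, j < J → 0 < f j)
    (hindep : ProbabilityTheory.iIndepFun (m := fun _ => MeasurableSpace.pi)
      (fun k ω j => C k j ω) μ)
    (hCL : ∀ k j, j < J → μ[C k (j + 1) | hist (C k) j] =ᵐ[μ] fun ω => f j * C k j ω)
    (fhat : ℕ → Ω → ℝ)
    (hfhat : ∀ j, fhat j = fun ω =>
      (∑ k ∈ Icc 1 (I - j - 1), C k (j + 1) ω) / (∑ k ∈ Icc 1 (I - j - 1), C k j ω))
    (Chat : Ω → ℝ)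
    (hChat : Chat = fun ω => C i (I - i) ω * ∏ l ∈ Ico (I - i) J, fhat l ω)
    (hChatInt : Integrable Chat μ) :
    μ[Chat | histAll I C (I - i)] =ᵐ[μ] μ[C i J | histAll I C (I - i)] := by
  obtain rfl : fhat = chainLadderFactor I C := funext hfhat
  subst hChat
  have hi : i ∈ Set.Icc 1 I := ⟨by omega, hi2⟩
  have hiJ : I - i ≤ J := by omega
  have hf_ne : ∀ l ∈ Ico (I - i) J, f l ≠ 0 := fun l hl => (hf l (mem_Ico.1 hl).2).ne'
  have h_pred := condExp_eq_prod_smul_of_condExp_succ (histAllFiltration hmeas) hiJ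
    (X := chainLadderPredictor I C i) (measurable_chainLadderPredictor hi hiJ).stronglyMeasurable
    hChatInt hf_ne fun l hl => condExp_chainLadderPredictor_succ hmeas hint hindep hi
      (mem_Ico.1 hl).1 (by grind) (fun k => hpos k l) (fun k => hCL k l (mem_Ico.1 hl).2)
  have h_claim := condExp_eq_prod_smul_of_condExp_succ (histAllFiltration hmeas) hiJ
    (X := C i) (measurable_histAll hi le_rfl).stronglyMeasurable (hint i J) hf_ne
    fun l hl _ => (condExp_histAll_eq_condExp_hist hmeas hindep hi (hint i (l + 1))).trans
      (hCL i l (mem_Ico.1 hl).2)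
  rw [chainLadderPredictor_self] at h_pred
  exact h_pred.trans h_claim.symm

/-- Conditional unbiasedness of the chain-ladder predictor:
`E[Ĉ_{i,J} | B_{I-i}] = E[C_{i,J} | B_{I-i}]` a.s. for accident periods `i > I - J`. -/
theorem stmt_8 {Ω : Type*} {m0 : MeasurableSpace Ω} (μ : Measure Ω) [IsProbabilityMeasure μ]
    (I J i : ℕ) (hJ : 1 ≤ J) (hIJ : J < I) (hi1 : I - J < i) (hi2 : i ≤ I)
    (C : ℕ → ℕ → Ω → ℝ) (f : ℕ → ℝ)
    (hmeas : ∀ k j, Measurable (C k j))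
    (hint : ∀ k j, Integrable (C k j) μ)
    (hpos : ∀ k j, ∀ᵐ ω ∂μ, 0 < C k j ω)
    (hf : ∀ j, j < J → 0 < f j)
    (hindep : ProbabilityTheory.iIndepFun (m := fun _ => MeasurableSpace.pi)
      (fun k ω j => C k j ω) μ)
    (hCL : ∀ k j, j < J → μ[C k (j + 1) | hist (C k) j] =ᵐ[μ] fun ω => f j * C k j ω)
    (fhat : ℕ → Ω → ℝ)
    (hfhat : ∀ j, fhat j = fun ω =>
      (∑ k ∈ Icc 1 (I - j - 1), C k (j + 1) ω) / (∑ k ∈ Icc 1 (I - j - 1), C k j ω))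
    (Chat : Ω → ℝ)
    (hChat : Chat = fun ω => C i (I - i) ω * ∏ l ∈ Ico (I - i) J, fhat l ω)
    (hChatInt : Integrable Chat μ) :
    μ[Chat | histAll I C (I - i)] =ᵐ[μ] μ[C i J | histAll I C (I - i)] :=
  stmt_8_general (m0 := m0) μ I J i hIJ hi1 hi2 C f hmeas hint hpos hf hindep hCL fhat hfhat Chat
    hChat hChatInt
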